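/- Let W be a d×d matrix weight on ℝ such that ⟨W⟩_I is positive definite for every I ∈ 𝒟. With the disbalanced Haar functions g_I^{W,k} = w_I^k h_I e_I^k + h_I¹ A(W,I) e_I^k (where e_I^1, …, e_I^d is an orthonormal eigenbasis of ⟨W⟩_I, w_I^k = ‖⟨W⟩_I^{1/2} e_I^k‖^{-1}, and A(W,I) = (1/2)|I|^{1/2} ⟨W⟩_I^{-1} (⟨W⟩_{I₋} − ⟨W⟩_{I₊}) ⟨W⟩_I^{-1/2}), one has ‖g_I^{W,k}‖_{L²(W)} ≤ 5 for every I ∈ 𝒟 and 1 ≤ k ≤ d, where ‖u‖²_{L²(W)} = ∫_ℝ ⟨W(x)u(x), u(x)⟩_{ℂ^d} dx. Moreover the functions w_I^k h_I e_I^k are normalized: ‖w_I^k h_I e_I^k‖_{L²(W)} = 1. -/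

import Mathlib

open MeasureTheory Matrix Filter
open scoped ENNReal ComplexOrder

noncomputable section

abbrev Vec (d : ℕ) := Fin d → ℂ
abbrev Mat (d : ℕ) := Matrix (Fin d) (Fin d) ℂ

/-- The standard dyadic interval `[2^{-k} n, 2^{-k}(n+1))`. -/
def dyadI (k n : ℤ) : Set ℝ := Set.Ico ((2:ℝ) ^ (-k) * n) ((2:ℝ) ^ (-k) * (n + 1))

/-- The Haar function of the dyadic interval indexed by `(k, n)`. -/
def haar (k n : ℤ) (x : ℝ) : ℝ :=
  Real.sqrt ((2:ℝ) ^ k) *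
    ((dyadI (k+1) (2*n+1)).indicator (fun _ => (1:ℝ)) x -
      (dyadI (k+1) (2*n)).indicator (fun _ => (1:ℝ)) x)

/-- The non-cancellative Haar function `h_I^1 = 1_I / |I|`. -/
def hone (k n : ℤ) (x : ℝ) : ℝ := (dyadI k n).indicator (fun _ => (2:ℝ) ^ k) x

/-- Haar coefficient `f̂(I) = ∫ f · h_I`. -/
def fhat {d : ℕ} (f : ℝ → Vec d) (k n : ℤ) : Vec d :=
  ∫ x in dyadI k n, ((haar k n x : ℝ) : ℂ) • f x

/-- Average of a vector-valued function over a dyadic interval. -/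
def vavg {d : ℕ} (g : ℝ → Vec d) (k n : ℤ) : Vec d :=
  (2:ℝ) ^ k • ∫ x in dyadI k n, g x

/-- Average `⟨W⟩_I` of a matrix-valued function over a dyadic interval. -/
def avgD {d : ℕ} (W : ℝ → Mat d) (k n : ℤ) : Mat d :=
  Matrix.of fun i j => (2:ℝ) ^ k • ∫ x in dyadI k n, W x i j

/-- Average `⟨W⟩_{[a,b)}` of a matrix-valued function over an interval. -/
def avgI {d : ℕ} (W : ℝ → Mat d) (a b : ℝ) : Mat d :=
  Matrix.of fun i j => (b - a)⁻¹ • ∫ x in Set.Ico a b, W x i j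

/-- Inner product on `ℂ^d`, linear in the first entry. -/
def ip {d : ℕ} (u v : Vec d) : ℂ := ∑ i, u i * (starRingEnd ℂ) (v i)

/-- Squared Euclidean norm on `ℂ^d`. -/
def vnSq {d : ℕ} (u : Vec d) : ℝ := ∑ i, ‖u i‖ ^ 2

/-- Quadratic form `⟨A u, u⟩`. -/
def qf {d : ℕ} (A : Mat d) (u : Vec d) : ℝ := (ip (A.mulVec u) u).re

/-- Operator norm of a matrix acting on `ℂ^d`. -/
def mOpNorm {d : ℕ} (A : Mat d) : ℝ := ‖Matrix.toEuclideanCLM (𝕜 := ℂ) A‖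

/-- The positive semidefinite square root (junk value `0` if not psd). -/
def msqrt {d : ℕ} (A : Mat d) : Mat d :=
  @dite _ A.PosSemidef (Classical.dec _) (fun h => h.1.eigenvectorUnitary.1 *
    diagonal ((↑) ∘ (Real.sqrt ·) ∘ h.1.eigenvalues) * (star h.1.eigenvectorUnitary : Matrix (Fin d) (Fin d) ℂ)) (fun _ => 0)

/-- `‖f‖²_{L²(W)}`, valued in `[0,∞]`. -/
def wNormSq {d : ℕ} (W : ℝ → Mat d) (f : ℝ → Vec d) : ℝ≥0∞ :=
  ∫⁻ x, ENNReal.ofReal (qf (W x) (f x))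

/-- `‖f‖²_{L²(ℝ,ℂ^d)}`, valued in `[0,∞]`. -/
def l2NormSq {d : ℕ} (f : ℝ → Vec d) : ℝ≥0∞ :=
  ∫⁻ x, ENNReal.ofReal (vnSq (f x))

/-- The weighted square function sum `∑_{I ∈ 𝒟} ⟨⟨W⟩_I f̂(I), f̂(I)⟩`. -/
def sqSum {d : ℕ} (W : ℝ → Mat d) (f : ℝ → Vec d) : ℝ≥0∞ :=
  ∑' p : ℤ × ℤ, ENNReal.ofReal (qf (avgD W p.1 p.2) (fhat f p.1 p.2))

/-- `W` is a matrix weight: locally integrable entries, a.e. positive semidefinite values. -/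
def IsMatrixWeight {d : ℕ} (W : ℝ → Mat d) : Prop :=
  (∀ i j, LocallyIntegrable (fun x => W x i j) volume) ∧
  (∀ᵐ x ∂volume, (W x).PosSemidef)

/-- `K` bounds the `A₂` characteristic `sup_I ‖⟨W⟩_I^{1/2} ⟨W^{-1}⟩_I^{1/2}‖²` of `W`. -/
def A2Bound {d : ℕ} (W : ℝ → Mat d) (K : ℝ) : Prop :=
  ∀ a b : ℝ, a < b →
    mOpNorm (msqrt (avgI W a b) * msqrt (avgI (fun x => (W x)⁻¹) a b)) ^ 2 ≤ K

/-- `W` is a matrix `A₂` weight with `A₂` characteristic at most `K` (and `1 ≤ K`,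
as the characteristic is always at least `1`).  The positive definiteness of the
averages of `W` and `W⁻¹` is recorded as well. -/
def IsA2Weight {d : ℕ} (W : ℝ → Mat d) (K : ℝ) : Prop :=
  IsMatrixWeight W ∧ (∀ᵐ x ∂volume, IsUnit (W x).det) ∧
  IsMatrixWeight (fun x => (W x)⁻¹) ∧ 1 ≤ K ∧ A2Bound W K ∧
  (∀ a b : ℝ, a < b → (avgI W a b).PosDef) ∧
  (∀ a b : ℝ, a < b → (avgI (fun x => (W x)⁻¹) a b).PosDef) ∧
  (∀ k n : ℤ, (avgD W k n).PosDef) ∧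
  (∀ k n : ℤ, (avgD (fun x => (W x)⁻¹) k n).PosDef)


/-- The normalizing coefficient `w_I^k = ‖⟨W⟩_I^{1/2} e‖⁻¹`. -/
def wCoef {d : ℕ} (W : ℝ → Mat d) (k n : ℤ) (e : Vec d) : ℝ :=
  (Real.sqrt (vnSq ((msqrt (avgD W k n)).mulVec e)))⁻¹

/-- The matrix `A(W,I) = (1/2)|I|^{1/2} ⟨W⟩_I⁻¹ (⟨W⟩_{I₋} − ⟨W⟩_{I₊}) ⟨W⟩_I^{-1/2}`. -/
def AWI {d : ℕ} (W : ℝ → Mat d) (k n : ℤ) : Mat d :=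
  ((2:ℝ)⁻¹ * Real.sqrt ((2:ℝ) ^ (-k))) •
    ((avgD W k n)⁻¹ * (avgD W (k+1) (2*n) - avgD W (k+1) (2*n+1)) * (msqrt (avgD W k n))⁻¹)

/-- The disbalanced Haar function `g_I^{W,k} = w_I^k h_I e + h_I¹ A(W,I) e`. -/
def disHaar {d : ℕ} (W : ℝ → Mat d) (k n : ℤ) (e : Vec d) (x : ℝ) : Vec d :=
  (wCoef W k n e * haar k n x) • e + hone k n x • ((AWI W k n).mulVec e)


/-!
On each half of `I` the function `g = g_I^{W,k}` is constant, equal to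
`∓ w √|I|⁻¹ e + |I|⁻¹ A e` with `A = A(W,I)`, so `‖g‖²_{L²(W)}` is a combination of quadratic
forms of `M± = ⟨W⟩_{I±}`, and `M₋ + M₊ = 2M` for `M = ⟨W⟩_I`. This makes the Haar part have norm
exactly `w² ⟨M e, e⟩ = 1`, and the parallelogram law gives `‖g‖² ≤ 2 + 2 |I|⁻¹ ⟨M A e, A e⟩`.
With `v = M^{-1/2} e` we have `|I|⁻¹ ⟨M A e, A e⟩ = ⟨M⁻¹ (M₋ - M₊) v, (M₋ - M₊) v⟩ / 4`, and
`0 ≤ M± ≤ 2M` gives `⟨M⁻¹ M± v, M± v⟩ ≤ 2 ⟨M± v, v⟩`, whence the bound `8 ⟨M v, v⟩ = 8` for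
the numerator. Altogether `‖g‖² ≤ 6`.
-/

variable {d : ℕ}

lemma qf_eq_re_dotProduct (A : Mat d) (u : Vec d) : qf A u = (star u ⬝ᵥ A *ᵥ u).re := by
  simp [qf, ip, dotProduct, mul_comm]

lemma vnSq_eq_qf_one (u : Vec d) : vnSq u = qf 1 u := by
  simp [qf_eq_re_dotProduct, vnSq, dotProduct, Complex.conj_mul', ← Complex.ofReal_pow]

lemma qf_nonneg {A : Mat d} (hA : A.PosSemidef) (u : Vec d) : 0 ≤ qf A u := by
  rw [qf_eq_re_dotProduct]
  exact hA.re_dotProduct_nonneg u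

lemma qf_pos {A : Mat d} (hA : A.PosDef) {u : Vec d} (hu : u ≠ 0) : 0 < qf A u := by
  rw [qf_eq_re_dotProduct]
  exact (RCLike.pos_iff.mp (hA.dotProduct_mulVec_pos hu)).1

lemma qf_add_left (A B : Mat d) (u : Vec d) : qf (A + B) u = qf A u + qf B u := by
  simp [qf_eq_re_dotProduct, add_mulVec]

lemma qf_smul_left (r : ℝ) (A : Mat d) (u : Vec d) : qf (r • A) u = r * qf A u := by
  simp [qf_eq_re_dotProduct, smul_mulVec]

lemma qf_eq_sum (A : Mat d) (u : Vec d) :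
    qf A u = ∑ i, ∑ j, (A i j * (u j * starRingEnd ℂ (u i))).re := by
  simp only [qf, ip, mulVec, dotProduct, Finset.sum_mul, Complex.re_sum]
  congr! 2 with i - j -
  ring_nf

lemma re_star_dotProduct_conjTranspose_mulVec (A : Mat d) (u v : Vec d) :
    (star u ⬝ᵥ Aᴴ *ᵥ v).re = (star v ⬝ᵥ A *ᵥ u).re := by
  rw [star_dotProduct, star_mulVec, conjTranspose_conjTranspose, ← dotProduct_mulVec,
    Complex.star_def, Complex.conj_re]

lemma qf_conjTranspose (A : Mat d) (u : Vec d) : qf Aᴴ u = qf A u := by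
  simp only [qf_eq_re_dotProduct, re_star_dotProduct_conjTranspose_mulVec]

lemma qf_mulVec (A B : Mat d) (u : Vec d) : qf A (B *ᵥ u) = qf (Bᴴ * A * B) u := by
  simp only [qf_eq_re_dotProduct, star_mulVec, ← dotProduct_mulVec, mulVec_mulVec, mul_assoc]

lemma qf_smul (A : Mat d) (r : ℝ) (u : Vec d) : qf A (r • u) = r ^ 2 * qf A u := by
  simp [qf_eq_re_dotProduct, mulVec_smul, pow_two, mul_assoc]

lemma qf_neg (A : Mat d) (u : Vec d) : qf A (-u) = qf A u := by
  simpa using qf_smul A (-1) u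

lemma qf_add {A : Mat d} (hA : A.IsHermitian) (u v : Vec d) :
    qf A (u + v) = qf A u + qf A v + 2 * (star v ⬝ᵥ A *ᵥ u).re := by
  have h : (star u ⬝ᵥ A *ᵥ v).re = (star v ⬝ᵥ A *ᵥ u).re := by
    rw [← re_star_dotProduct_conjTranspose_mulVec, hA.eq]
  simp only [qf_eq_re_dotProduct, star_add, mulVec_add, add_dotProduct, dotProduct_add,
    Complex.add_re, h]
  ring

lemma qf_add_le {A : Mat d} (hA : A.PosSemidef) (u v : Vec d) :
    qf A (u + v) ≤ 2 * qf A u + 2 * qf A v := by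
  have h₁ := qf_add hA.1 u v
  have h₂ := qf_add hA.1 u (-v)
  simp only [qf_neg, star_neg, neg_dotProduct, Complex.neg_re, ← sub_eq_add_neg] at h₂
  linarith [qf_nonneg hA (u - v)]

lemma qf_mulVec_nonsing_inv {M : Mat d} (hM : IsUnit M.det) (z : Vec d) :
    qf M (M⁻¹ *ᵥ z) = qf M⁻¹ z := by
  rw [qf_mulVec, mul_assoc, mul_nonsing_inv M hM, mul_one, qf_conjTranspose]

/-- Expand `0 ≤ ⟨B (c w - v), c w - v⟩` for `v = M⁻¹ B w`, and bound its last term by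
`⟨B v, v⟩ ≤ c ⟨M v, v⟩ = c ⟨M⁻¹ B w, B w⟩`. -/
lemma qf_nonsing_inv_mulVec_le {B M : Mat d} (hB : B.PosSemidef) (hM : IsUnit M.det) {c : ℝ}
    (hc : 0 < c) (hBM : ∀ u, qf B u ≤ c * qf M u) (w : Vec d) :
    qf M⁻¹ (B *ᵥ w) ≤ c * qf B w := by
  have hcross : (star (M⁻¹ *ᵥ (B *ᵥ w)) ⬝ᵥ B *ᵥ w).re = qf M⁻¹ (B *ᵥ w) := by
    simpa [qf_eq_re_dotProduct] using
      (re_star_dotProduct_conjTranspose_mulVec 1 (B *ᵥ w) (M⁻¹ *ᵥ (B *ᵥ w))).symm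
  have hexp := qf_add hB.1 (c • w) (-(M⁻¹ *ᵥ (B *ᵥ w)))
  rw [qf_smul, qf_neg] at hexp
  simp only [star_neg, neg_dotProduct, mulVec_smul, dotProduct_smul, Complex.neg_re,
    Complex.real_smul, Complex.re_ofReal_mul, hcross] at hexp
  have hv : qf B (M⁻¹ *ᵥ (B *ᵥ w)) ≤ c * qf M⁻¹ (B *ᵥ w) := by
    simpa only [qf_mulVec_nonsing_inv hM] using hBM (M⁻¹ *ᵥ (B *ᵥ w))
  have : c * qf M⁻¹ (B *ᵥ w) ≤ c * (c * qf B w) := by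
    nlinarith [qf_nonneg hB (c • w + -(M⁻¹ *ᵥ (B *ᵥ w)))]
  exact le_of_mul_le_mul_left this hc

lemma qf_nonsing_inv_sub_mulVec_le {M M₁ M₂ : Mat d} (hM : M.PosDef) (h₁ : M₁.PosSemidef)
    (h₂ : M₂.PosSemidef) (hsum : M₁ + M₂ = (2 : ℝ) • M) (w : Vec d) :
    qf M⁻¹ ((M₁ - M₂) *ᵥ w) ≤ 8 * qf M w := by
  have hdet : IsUnit M.det := hM.isUnit.map detMonoidHom
  have hqf : ∀ u, qf M₁ u + qf M₂ u = 2 * qf M u := fun u => by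
    rw [← qf_add_left, hsum, qf_smul_left]
  have hle₁ := qf_nonsing_inv_mulVec_le h₁ hdet two_pos
    (fun u => by linarith [hqf u, qf_nonneg h₂ u]) w
  have hle₂ := qf_nonsing_inv_mulVec_le h₂ hdet two_pos
    (fun u => by linarith [hqf u, qf_nonneg h₁ u]) w
  have hsub := qf_add_le hM.inv.posSemidef (M₁ *ᵥ w) (-(M₂ *ᵥ w))
  rw [qf_neg, ← sub_eq_add_neg, ← sub_mulVec] at hsub
  linarith [hqf w]

open scoped MatrixOrder in
lemma msqrt_eq_cfcSqrt {A : Mat d} (hA : A.PosSemidef) : msqrt A = CFC.sqrt A := by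
  have : 0 ≤ A := hA.nonneg
  rw [CFC.sqrt_eq_real_sqrt A, cfcₙ_eq_cfc, hA.1.cfc_eq, msqrt, dif_pos hA]
  rfl

open scoped MatrixOrder in
lemma msqrt_mul_self {A : Mat d} (hA : A.PosSemidef) : msqrt A * msqrt A = A := by
  rw [msqrt_eq_cfcSqrt hA]
  exact CFC.sqrt_mul_sqrt_self A hA.nonneg

open scoped MatrixOrder in
lemma isHermitian_msqrt {A : Mat d} (hA : A.PosSemidef) : (msqrt A).IsHermitian := by
  rw [msqrt_eq_cfcSqrt hA]
  exact (CFC.sqrt_nonneg A).isSelfAdjoint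

open scoped MatrixOrder in
lemma isUnit_msqrt {A : Mat d} (hA : A.PosDef) : IsUnit (msqrt A) := by
  rw [msqrt_eq_cfcSqrt hA.posSemidef, CFC.isUnit_sqrt_iff A hA.posSemidef.nonneg]
  exact hA.isUnit

lemma vnSq_msqrt_mulVec {A : Mat d} (hA : A.PosSemidef) (u : Vec d) :
    vnSq (msqrt A *ᵥ u) = qf A u := by
  rw [vnSq_eq_qf_one, qf_mulVec, mul_one, (isHermitian_msqrt hA).eq, msqrt_mul_self hA]

lemma qf_msqrt_inv_mulVec {A : Mat d} (hA : A.PosDef) (u : Vec d) :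
    qf A ((msqrt A)⁻¹ *ᵥ u) = vnSq u := by
  have hS2 := msqrt_mul_self hA.posSemidef
  have hSh := (isHermitian_msqrt hA.posSemidef).eq
  have hdet : IsUnit (msqrt A).det := (isUnit_msqrt hA).map detMonoidHom
  set S := msqrt A
  rw [qf_mulVec, conjTranspose_nonsing_inv, hSh, ← hS2, ← mul_assoc, nonsing_inv_mul _ hdet,
    one_mul, mul_nonsing_inv _ hdet, vnSq_eq_qf_one]

lemma measurableSet_dyadI (k n : ℤ) : MeasurableSet (dyadI k n) := measurableSet_Ico

lemma two_zpow_neg_succ (k : ℤ) : (2 : ℝ) ^ (-(k + 1)) = 2 ^ (-k) / 2 := by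
  rw [neg_add, zpow_add₀ two_ne_zero, _root_.zpow_neg_one, div_eq_mul_inv]

lemma dyadI_left (k n : ℤ) :
    dyadI (k + 1) (2 * n) = Set.Ico ((2 : ℝ) ^ (-k) * n) (2 ^ (-k) * (n + 1 / 2)) := by
  simp only [dyadI, two_zpow_neg_succ]
  push_cast
  congr 1 <;> ring

lemma dyadI_right (k n : ℤ) :
    dyadI (k + 1) (2 * n + 1) = Set.Ico ((2 : ℝ) ^ (-k) * (n + 1 / 2)) (2 ^ (-k) * (n + 1)) := by
  simp only [dyadI, two_zpow_neg_succ]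
  push_cast
  congr 1 <;> ring

lemma dyadI_left_union_right (k n : ℤ) :
    dyadI (k + 1) (2 * n) ∪ dyadI (k + 1) (2 * n + 1) = dyadI k n := by
  have h : (0 : ℝ) < 2 ^ (-k) := zpow_pos two_pos _
  rw [dyadI_left, dyadI_right, Set.Ico_union_Ico_eq_Ico (by gcongr; linarith) (by gcongr; linarith)]
  rfl

lemma disjoint_dyadI_left_right (k n : ℤ) :
    Disjoint (dyadI (k + 1) (2 * n)) (dyadI (k + 1) (2 * n + 1)) := by
  rw [dyadI_left, dyadI_right]
  exact Set.Ico_disjoint_Ico_same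

section Integrals

variable {W : ℝ → Mat d}

lemma integrableOn_entry (hW : IsMatrixWeight W) (j m : ℤ) (i i' : Fin d) :
    IntegrableOn (fun x => W x i i') (dyadI j m) :=
  ((hW.1 i i').integrableOn_isCompact isCompact_Icc).mono_set Set.Ico_subset_Icc_self

lemma integrableOn_qf (hW : IsMatrixWeight W) (j m : ℤ) (v : Vec d) :
    IntegrableOn (fun x => qf (W x) v) (dyadI j m) := by
  simp only [qf_eq_sum]
  exact integrable_finsetSum _ fun i _ => integrable_finsetSum _ fun i' _ =>
    ((integrableOn_entry hW j m i i').mul_const _).re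

lemma setIntegral_qf (hW : IsMatrixWeight W) (j m : ℤ) (v : Vec d) :
    ∫ x in dyadI j m, qf (W x) v = 2 ^ (-j) * qf (avgD W j m) v := by
  have hint : ∀ i i', Integrable (fun x => W x i i' * (v i' * starRingEnd ℂ (v i)))
      (volume.restrict (dyadI j m)) := fun i i' => (integrableOn_entry hW j m i i').mul_const _
  simp only [qf_eq_sum, Finset.mul_sum]
  refine (integral_finsetSum _ fun i _ => integrable_finsetSum _ fun i' _ => (hint i i').re).trans
    (Finset.sum_congr rfl fun i _ => ?_)
  refine (integral_finsetSum _ fun i' _ => (hint i i').re).trans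
    (Finset.sum_congr rfl fun i' _ => ?_)
  refine (integral_re (hint i i')).trans ?_
  rw [integral_mul_const]
  simp only [RCLike.re_to_complex, avgD, of_apply, Complex.real_smul, mul_assoc,
    Complex.re_ofReal_mul]
  simp only [← mul_assoc, ← zpow_add₀ (two_ne_zero' ℝ), neg_add_cancel, zpow_zero, one_mul]

lemma posSemidef_avgD (hW : IsMatrixWeight W) (j m : ℤ) : (avgD W j m).PosSemidef := by
  have hH : (avgD W j m).IsHermitian := by
    ext i i'
    simp only [conjTranspose_apply, avgD, of_apply, star_smul, star_trivial]
    rw [show star (∫ x in dyadI j m, W x i' i) = ∫ x in dyadI j m, star (W x i' i) from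
      integral_conj.symm]
    refine congrArg _ (integral_congr_ae (ae_restrict_of_ae (hW.2.mono fun x hx => ?_)))
    exact congrFun₂ hx.1 i i'
  refine .of_dotProduct_mulVec_nonneg hH fun u => RCLike.nonneg_iff.mpr ⟨?_, ?_⟩
  · have hnonneg : 0 ≤ ∫ x in dyadI j m, qf (W x) u :=
      integral_nonneg_of_ae (ae_restrict_of_ae (hW.2.mono fun x hx => qf_nonneg hx u))
    rw [setIntegral_qf hW] at hnonneg
    rw [RCLike.re_to_complex, ← qf_eq_re_dotProduct]
    exact nonneg_of_mul_nonneg_right hnonneg (zpow_pos two_pos _)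
  · exact hH.im_star_dotProduct_mulVec_self u

lemma avgD_left_add_right (hW : IsMatrixWeight W) (k n : ℤ) :
    avgD W (k + 1) (2 * n) + avgD W (k + 1) (2 * n + 1) = (2 : ℝ) • avgD W k n := by
  ext i i'
  simp only [Matrix.add_apply, Matrix.smul_apply, avgD, of_apply]
  rw [← dyadI_left_union_right k n, setIntegral_union (disjoint_dyadI_left_right k n)
    (measurableSet_dyadI _ _) (integrableOn_entry hW _ _ i i') (integrableOn_entry hW _ _ i i'),
    Complex.real_smul, Complex.real_smul, Complex.real_smul, Complex.real_smul]
  push_cast [zpow_add_one₀ (two_ne_zero' ℂ)]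
  ring

end Integrals

section Haar

variable {W : ℝ → Mat d}

def stepOnHalves (k n : ℤ) (a b : Vec d) (x : ℝ) : Vec d :=
  (dyadI (k + 1) (2 * n)).indicator (fun _ => a) x +
    (dyadI (k + 1) (2 * n + 1)).indicator (fun _ => b) x

lemma stepOnHalves_add (k n : ℤ) (a b a' b' : Vec d) (x : ℝ) :
    stepOnHalves k n a b x + stepOnHalves k n a' b' x = stepOnHalves k n (a + a') (b + b') x := by
  simp only [stepOnHalves, Set.indicator_add]
  abel

lemma smul_haar_eq_stepOnHalves (k n : ℤ) (c : ℝ) (e : Vec d) (x : ℝ) :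
    (c * haar k n x) • e =
      stepOnHalves k n ((-(c * √(2 ^ k))) • e) ((c * √(2 ^ k)) • e) x := by
  by_cases h₁ : x ∈ dyadI (k + 1) (2 * n) <;>
    by_cases h₂ : x ∈ dyadI (k + 1) (2 * n + 1) <;>
    simp [stepOnHalves, haar, h₁, h₂]

lemma hone_smul_eq_stepOnHalves (k n : ℤ) (v : Vec d) (x : ℝ) :
    hone k n x • v = stepOnHalves k n ((2 : ℝ) ^ k • v) ((2 : ℝ) ^ k • v) x := by
  rw [hone, ← dyadI_left_union_right,
    Set.indicator_union_of_disjoint (disjoint_dyadI_left_right k n), stepOnHalves, add_smul,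
    Set.indicator_smul_const_apply, Set.indicator_smul_const_apply]

lemma integral_qf_stepOnHalves (hW : IsMatrixWeight W) (k n : ℤ) (a b : Vec d) :
    ∫ x, qf (W x) (stepOnHalves k n a b x) =
      2 ^ (-(k + 1)) * (qf (avgD W (k + 1) (2 * n)) a + qf (avgD W (k + 1) (2 * n + 1)) b) := by
  have hsplit : (fun x => qf (W x) (stepOnHalves k n a b x)) = fun x =>
      (dyadI (k + 1) (2 * n)).indicator (fun x => qf (W x) a) x +
        (dyadI (k + 1) (2 * n + 1)).indicator (fun x => qf (W x) b) x := by
    funext x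
    by_cases h₁ : x ∈ dyadI (k + 1) (2 * n)
    · have h₂ := Set.disjoint_left.mp (disjoint_dyadI_left_right k n) h₁
      simp [stepOnHalves, h₁, h₂]
    · by_cases h₂ : x ∈ dyadI (k + 1) (2 * n + 1) <;>
        simp [stepOnHalves, h₁, h₂, qf_eq_re_dotProduct]
  rw [hsplit,
    integral_add ((integrableOn_qf hW _ _ a).integrable_indicator (measurableSet_dyadI _ _))
      ((integrableOn_qf hW _ _ b).integrable_indicator (measurableSet_dyadI _ _)),
    integral_indicator (measurableSet_dyadI _ _), integral_indicator (measurableSet_dyadI _ _),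
    setIntegral_qf hW, setIntegral_qf hW, mul_add]

lemma integral_qf_stepOnHalves_add_le (hW : IsMatrixWeight W) (k n : ℤ) (a b a' b' : Vec d) :
    ∫ x, qf (W x) (stepOnHalves k n (a + a') (b + b') x) ≤
      2 * (∫ x, qf (W x) (stepOnHalves k n a b x)) +
        2 * ∫ x, qf (W x) (stepOnHalves k n a' b' x) := by
  rw [integral_qf_stepOnHalves hW, integral_qf_stepOnHalves hW, integral_qf_stepOnHalves hW]
  have h₁ := qf_add_le (posSemidef_avgD hW (k + 1) (2 * n)) a a'
  have h₂ := qf_add_le (posSemidef_avgD hW (k + 1) (2 * n + 1)) b b'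
  have := mul_le_mul_of_nonneg_left (add_le_add h₁ h₂)
    (zpow_pos (two_pos (α := ℝ)) (-(k + 1))).le
  linarith

lemma qf_avgD_left_add_right (hW : IsMatrixWeight W) (k n : ℤ) (u : Vec d) :
    qf (avgD W (k + 1) (2 * n)) u + qf (avgD W (k + 1) (2 * n + 1)) u = 2 * qf (avgD W k n) u := by
  rw [← qf_add_left, avgD_left_add_right hW, qf_smul_left]

lemma integral_qf_smul_haar (hW : IsMatrixWeight W) (k n : ℤ) (c : ℝ) (e : Vec d) :
    ∫ x, qf (W x) ((c * haar k n x) • e) = c ^ 2 * qf (avgD W k n) e := by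
  simp only [smul_haar_eq_stepOnHalves, integral_qf_stepOnHalves hW, qf_smul, neg_sq, ← mul_add,
    qf_avgD_left_add_right hW, mul_pow, Real.sq_sqrt (zpow_pos two_pos k).le, _root_.zpow_neg]
  field_simp
  rw [zpow_add_one₀ two_ne_zero]
  ring

lemma integral_qf_hone_smul (hW : IsMatrixWeight W) (k n : ℤ) (v : Vec d) :
    ∫ x, qf (W x) (hone k n x • v) = 2 ^ k * qf (avgD W k n) v := by
  simp only [hone_smul_eq_stepOnHalves, integral_qf_stepOnHalves hW, qf_smul, ← mul_add,
    qf_avgD_left_add_right hW, _root_.zpow_neg]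
  field_simp
  rw [zpow_add_one₀ two_ne_zero]

lemma integral_qf_disHaar_le (hW : IsMatrixWeight W) (k n : ℤ) (e : Vec d) :
    ∫ x, qf (W x) (disHaar W k n e x) ≤
      2 * (∫ x, qf (W x) ((wCoef W k n e * haar k n x) • e)) +
        2 * ∫ x, qf (W x) (hone k n x • AWI W k n *ᵥ e) := by
  simp only [disHaar, smul_haar_eq_stepOnHalves, hone_smul_eq_stepOnHalves, stepOnHalves_add]
  exact integral_qf_stepOnHalves_add_le hW k n _ _ _ _

lemma wCoef_sq_mul_qf {k n : ℤ} (hM : (avgD W k n).PosDef) {e : Vec d} (he : e ≠ 0) :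
    wCoef W k n e ^ 2 * qf (avgD W k n) e = 1 := by
  rw [wCoef, vnSq_msqrt_mulVec hM.posSemidef, inv_pow, Real.sq_sqrt (qf_pos hM he).le,
    inv_mul_cancel₀ (qf_pos hM he).ne']

lemma two_zpow_mul_qf_AWI_mulVec_le (hW : IsMatrixWeight W) {k n : ℤ} (hM : (avgD W k n).PosDef)
    (e : Vec d) : 2 ^ k * qf (avgD W k n) (AWI W k n *ᵥ e) ≤ 2 * vnSq e := by
  have hsub := qf_nonsing_inv_sub_mulVec_le hM (posSemidef_avgD hW (k + 1) (2 * n))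
    (posSemidef_avgD hW (k + 1) (2 * n + 1)) (avgD_left_add_right hW k n)
    ((msqrt (avgD W k n))⁻¹ *ᵥ e)
  rw [qf_msqrt_inv_mulVec hM] at hsub
  rw [AWI, smul_mulVec, ← mulVec_mulVec, ← mulVec_mulVec, qf_smul,
    qf_mulVec_nonsing_inv (hM.isUnit.map detMonoidHom), mul_pow,
    Real.sq_sqrt (zpow_pos two_pos _).le, _root_.zpow_neg]
  calc _ = qf (avgD W k n)⁻¹ ((avgD W (k + 1) (2 * n) - avgD W (k + 1) (2 * n + 1)) *ᵥ
        (msqrt (avgD W k n))⁻¹ *ᵥ e) / 4 := by field_simp; ring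
    _ ≤ 2 * vnSq e := by linarith

end Haar

theorem disbalanced_haar_norm_general (d : ℕ) (W : ℝ → Mat d)
    (hW : IsMatrixWeight W) (hpos : ∀ k n : ℤ, (avgD W k n).PosDef)
    (k n : ℤ) (e : Vec d) (he : vnSq e = 1) :
    Real.sqrt (∫ x, qf (W x) (disHaar W k n e x)) ≤ 5 ∧
    ∫ x, qf (W x) (((wCoef W k n e * haar k n x) • e : Vec d)) = 1 := by
  have he0 : e ≠ 0 := by rintro rfl; simp [vnSq] at he
  have hnormalized : ∫ x, qf (W x) (((wCoef W k n e * haar k n x) • e : Vec d)) = 1 := by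
    rw [integral_qf_smul_haar hW, wCoef_sq_mul_qf (hpos k n) he0]
  refine ⟨?_, hnormalized⟩
  have hAWI := two_zpow_mul_qf_AWI_mulVec_le hW (hpos k n) e
  have hle : ∫ x, qf (W x) (disHaar W k n e x) ≤ 5 ^ 2 := by
    calc _ ≤ 2 * 1 + 2 * (2 ^ k * qf (avgD W k n) (AWI W k n *ᵥ e)) := by
          simpa only [hnormalized, integral_qf_hone_smul hW] using integral_qf_disHaar_le hW k n e
      _ ≤ 5 ^ 2 := by linarith
  exact Real.sqrt_le_iff.mpr ⟨by norm_num, hle⟩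

/-- **Norm bounds for disbalanced Haar functions**: `‖g_I^{W,k}‖_{L²(W)} ≤ 5`, and
the functions `w_I^k h_I e_I^k` are normalized in `L²(W)`. -/
theorem disbalanced_haar_norm (d : ℕ) (W : ℝ → Mat d)
    (hW : IsMatrixWeight W) (hpos : ∀ k n : ℤ, (avgD W k n).PosDef)
    (k n : ℤ) (e : Vec d) (he : vnSq e = 1)
    (heig : ∃ μ : ℝ, (avgD W k n).mulVec e = ((μ : ℂ) • e : Vec d)) :
    Real.sqrt (∫ x, qf (W x) (disHaar W k n e x)) ≤ 5 ∧
    ∫ x, qf (W x) (((wCoef W k n e * haar k n x) • e : Vec d)) = 1 :=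
  disbalanced_haar_norm_general d W hW hpos k n e he

end
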